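/- If H is a minor of a finite simple graph G, then xc(COR(H)) ≤ xc(COR(G)). -/

import Mathlib

open Set

noncomputable section

/-- A polytope in `ℝ^ι`: the convex hull of a finite set of points. -/
def IsPolytope {ι : Type*} (P : Set (ι → ℝ)) : Prop :=
  ∃ S : Finset (ι → ℝ), P = convexHull ℝ (S : Set (ι → ℝ))

/-- `F` is a face of `P`: the set of points of `P` maximizing some linear functional. -/
def IsFace {ι : Type*} (P F : Set (ι → ℝ)) : Prop :=
  ∃ (f : (ι → ℝ) →ₗ[ℝ] ℝ) (c : ℝ), (∀ x ∈ P, f x ≤ c) ∧ F = {x ∈ P | f x = c}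

/-- The dimension of a polytope: the dimension of (the direction of) its affine hull. -/
def polyDim {ι : Type*} (P : Set (ι → ℝ)) : ℕ :=
  Module.finrank ℝ (vectorSpan ℝ P)

/-- A facet of a polytope: a proper face of codimension 1. -/
def IsFacet {ι : Type*} (P F : Set (ι → ℝ)) : Prop :=
  IsFace P F ∧ F ≠ P ∧ polyDim F + 1 = polyDim P

/-- The number of facets of a polytope. -/
def facetCount {ι : Type*} (P : Set (ι → ℝ)) : ℕ :=
  Nat.card {F : Set (ι → ℝ) // IsFacet P F}

/-- `Q ⊆ ℝ^p` is an extension of `P`: a polytope mapping onto `P` under an affine map. -/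
def IsExtensionOf {p : ℕ} {ι : Type*} (Q : Set (Fin p → ℝ)) (P : Set (ι → ℝ)) : Prop :=
  IsPolytope Q ∧ ∃ π : (Fin p → ℝ) →ᵃ[ℝ] (ι → ℝ), π '' Q = P

/-- The extension complexity of `P`: the minimum number of facets of an extension of `P`. -/
def xc {ι : Type*} (P : Set (ι → ℝ)) : ℕ :=
  sInf { m | ∃ (p : ℕ) (Q : Set (Fin p → ℝ)), IsExtensionOf Q P ∧ facetCount Q = m }

open scoped Classical in
/-- The correlation polytope of a graph `G = (V,E)`: the convex hull in `ℝ^{V ∪ E}` of the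
vectors `(χ(X), χ(E(X)))` over all vertex subsets `X ⊆ V`. -/
def corPolytope {V : Type*} (G : SimpleGraph V) : Set ((V ⊕ ↥G.edgeSet) → ℝ) :=
  convexHull ℝ {x | ∃ X : Set V,
    (∀ v : V, x (Sum.inl v) = if v ∈ X then 1 else 0) ∧
    (∀ e : G.edgeSet, x (Sum.inr e) = if ∀ v ∈ (e : Sym2 V), v ∈ X then 1 else 0)}

/-- `H` is a minor of `G`: there are pairwise disjoint connected branch sets in `G`,
one for each vertex of `H`, with an edge of `G` between the branch sets of any two
vertices adjacent in `H`. -/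
def SimpleGraph.IsMinorOf {W V : Type*} (H : SimpleGraph W) (G : SimpleGraph V) : Prop :=
  ∃ B : W → Set V,
    (∀ w, (G.induce (B w)).Connected) ∧
    (Pairwise fun w w' => Disjoint (B w) (B w')) ∧
    (∀ ⦃w w'⦄, H.Adj w w' → ∃ u ∈ B w, ∃ v ∈ B w', G.Adj u v)

/-- A tree-decomposition of a graph `G`. -/
structure TreeDecomp {V : Type*} (G : SimpleGraph V) where
  ι : Type
  finite : Finite ι
  T : SimpleGraph ι
  isTree : T.IsTree
  B : ι → Set V
  bag_finite : ∀ t, (B t).Finite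
  vertex_cover : ∀ v : V, ∃ t, v ∈ B t
  edge_cover : ∀ ⦃u v : V⦄, G.Adj u v → ∃ t, u ∈ B t ∧ v ∈ B t
  subtree : ∀ v : V, (T.induce {t | v ∈ B t}).Connected

/-- The width of a tree-decomposition: `max |B_t| - 1`. -/
def TreeDecomp.width {V : Type*} {G : SimpleGraph V} (D : TreeDecomp G) : ℕ :=
  (⨆ t, (D.B t).ncard) - 1

/-- The treewidth of a graph: minimum width of a tree-decomposition. -/
def treewidth {V : Type*} (G : SimpleGraph V) : ℕ :=
  sInf { w | ∃ D : TreeDecomp G, D.width = w }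

/-- The `t × t` grid graph: `(a,b)` adjacent to `(a',b')` iff `|a-a'| + |b-b'| = 1`. -/
def gridGraph (t : ℕ) : SimpleGraph (Fin t × Fin t) where
  Adj p q := ((p.1 : ℤ) - (q.1 : ℤ)).natAbs + ((p.2 : ℤ) - (q.2 : ℤ)).natAbs = 1
  symm := by constructor; intro p q h; omega
  loopless := by constructor; intro p h; omega

/-- The graph `G'` obtained from `G` by adding, for each edge `e = uv`, a new vertex
adjacent exactly to `u` and `v` (keeping all edges of `G`). -/
def addEdgeVertices {V : Type*} (G : SimpleGraph V) : SimpleGraph (V ⊕ ↥G.edgeSet) where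
  Adj a b :=
    match a, b with
    | Sum.inl u, Sum.inl v => G.Adj u v
    | Sum.inl u, Sum.inr e => u ∈ (e : Sym2 V)
    | Sum.inr e, Sum.inl u => u ∈ (e : Sym2 V)
    | Sum.inr _, Sum.inr _ => False
  symm := by
    constructor
    rintro (u | e) (v | f) h
    · exact h.symm
    · exact h
    · exact h
    · exact h
  loopless := by
    constructor
    rintro (u | e) h
    · exact G.loopless.irrefl u h
    · exact h

/-- The graph `G / uv` obtained from `G` by contracting the edge `uv`
(the vertex `v` is merged into `u`). -/
def contractEdge {V : Type*} (G : SimpleGraph V) (u v : V) :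
    SimpleGraph {w : V // w ≠ v} where
  Adj a b := a ≠ b ∧
    (G.Adj a.1 b.1 ∨ (a.1 = u ∧ G.Adj v b.1) ∨ (b.1 = u ∧ G.Adj a.1 v))
  symm := by
    constructor
    rintro a b ⟨hne, h⟩
    refine ⟨hne.symm, ?_⟩
    rcases h with h | ⟨h1, h2⟩ | ⟨h1, h2⟩
    · exact Or.inl h.symm
    · exact Or.inr (Or.inr ⟨h1, h2.symm⟩)
    · exact Or.inr (Or.inl ⟨h1, h2.symm⟩)
  loopless := by constructor; rintro a ⟨hne, _⟩; exact hne rfl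

lemma deleteEdges_edgeSet_subset {V : Type*} (G : SimpleGraph V) (s : Set (Sym2 V)) :
    (G.deleteEdges s).edgeSet ⊆ G.edgeSet := by
  rw [SimpleGraph.edgeSet_deleteEdges]
  exact Set.sdiff_subset

lemma induce_edge_mem {V : Type*} (G : SimpleGraph V) (s : Set V) (e : Sym2 ↥s)
    (he : e ∈ (G.induce s).edgeSet) : Sym2.map Subtype.val e ∈ G.edgeSet := by
  induction e using Sym2.ind with
  | _ a b => simpa using he

/-!
For branch sets `B w` of the minor, the functional `∑ (x_{uv} - x_u)` over the darts
`(u, v)` of `G` inside a branch set is `≤ 0` on `COR(G)`, and it vanishes at `χ_X` exactly when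
`X` is a union of branch sets. Reading off one representative vertex of each branch set and one
`G`-edge between the branch sets of each edge of `H` maps this face of `COR(G)` onto `COR(H)`.
Extension complexity does not grow under affine images (compose the projections) nor under
passing to a face (pull the face back to a face of an optimal extension). A face of a polytope
has at most as many facets as the polytope: a proper face lies in a facet, and each nonempty
facet of a facet `F` is `F ∩ K` for a facet `K ≠ F`, different for different facets of `F`.
-/

section LevelSets

variable {E : Type*} [AddCommGroup E] [Module ℝ E] {A : Set E} {h : E →ₗ[ℝ] ℝ} {m : ℝ}

theorem le_of_mem_convexHull_of_forall_le (hA : ∀ a ∈ A, h a ≤ m) {x : E}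
    (hx : x ∈ convexHull ℝ A) : h x ≤ m :=
  convexHull_min hA (convex_halfSpace_le h.isLinear m) hx

theorem eq_of_mem_convexHull_of_forall_eq (hA : ∀ a ∈ A, h a = m) {x : E}
    (hx : x ∈ convexHull ℝ A) : h x = m :=
  convexHull_min hA (convex_hyperplane h.isLinear m) hx

theorem convexHull_sep_eq (hA : ∀ a ∈ A, h a ≤ m) :
    {x ∈ convexHull ℝ A | h x = m} = convexHull ℝ {a ∈ A | h a = m} := by
  refine subset_antisymm ?_ fun x hx =>
    ⟨convexHull_mono (sep_subset _ _) hx, eq_of_mem_convexHull_of_forall_eq (fun a ha => ha.2) hx⟩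
  rintro _ ⟨hx, hxm⟩
  obtain ⟨κ, t, w, z, hw₀, hw₁, hzA, rfl⟩ := (convexHull_eq A).subset hx
  have hslack : ∑ i ∈ t, w i * (m - h (z i)) = 0 := by
    rw [Finset.centerMass_eq_of_sum_1 _ _ hw₁, map_sum] at hxm
    simp only [map_smul, smul_eq_mul] at hxm
    simp only [mul_sub, Finset.sum_sub_distrib, ← Finset.sum_mul, hw₁, hxm, one_mul, sub_self]
  have htight : ∀ i ∈ t, w i ≠ 0 → h (z i) = m := fun i hi hwi => by
    have := (Finset.sum_eq_zero_iff_of_nonneg fun j hj =>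
      mul_nonneg (hw₀ j hj) (sub_nonneg.2 (hA _ (hzA j hj)))).1 hslack i hi
    linarith [(mul_eq_zero.1 this).resolve_left hwi]
  classical
  rw [← Finset.centerMass_filter_ne_zero]
  refine Finset.centerMass_mem_convexHull _ (fun i hi => hw₀ i (Finset.mem_filter.1 hi).1)
    (by rw [Finset.sum_filter_ne_zero, hw₁]; exact one_pos) fun i hi => ?_
  obtain ⟨hi, hwi⟩ := Finset.mem_filter.1 hi
  exact ⟨hzA i hi, htight i hi hwi⟩

end LevelSets

/-- Tilting the supporting inequality `h ≤ m` in the direction `g` (constant on its tight set)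
until it becomes tight at a new point. -/
theorem exists_pos_forall_add_mul_le {α : Type*} {S : Finset α} {h g : α → ℝ} {m γ : ℝ}
    (hb : ∀ s ∈ S, h s ≤ m) (hg : ∀ s ∈ S, h s = m → g s = γ) {s₀ : α} (hs₀ : s₀ ∈ S)
    (hγ : γ < g s₀) :
    ∃ t : ℝ, 0 < t ∧ (∀ s ∈ S, h s + t * g s ≤ m + t * γ) ∧
      ∃ s₁ ∈ S, h s₁ < m ∧ h s₁ + t * g s₁ = m + t * γ := by
  classical
  set T := S.filter fun s => γ < g s
  have hT : ∀ s ∈ T, s ∈ S ∧ h s < m ∧ γ < g s := fun s hs => by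
    obtain ⟨hsS, hsg⟩ := Finset.mem_filter.1 hs
    exact ⟨hsS, (hb s hsS).lt_of_ne fun hsm => hsg.ne' (hg s hsS hsm), hsg⟩
  have hTne : T.Nonempty := ⟨s₀, Finset.mem_filter.2 ⟨hs₀, hγ⟩⟩
  set q : α → ℝ := fun s => (m - h s) / (g s - γ)
  obtain ⟨s₁, hs₁T, ht⟩ := T.exists_mem_eq_inf' hTne q
  obtain ⟨hs₁S, hs₁m, hs₁g⟩ := hT s₁ hs₁T
  have htpos : 0 < q s₁ := div_pos (sub_pos.2 hs₁m) (sub_pos.2 hs₁g)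
  refine ⟨q s₁, htpos, fun s hs => ?_, s₁, hs₁S, hs₁m, ?_⟩
  · by_cases hsg : γ < g s
    · have := (le_div_iff₀ (sub_pos.2 hsg)).1
        (ht ▸ Finset.inf'_le q (Finset.mem_filter.2 ⟨hs, hsg⟩))
      linarith
    · nlinarith [hb s hs]
  · have := div_mul_cancel₀ (m - h s₁) (sub_pos.2 hs₁g).ne'
    linarith

section AffineSpan

variable {E : Type*} [AddCommGroup E] [Module ℝ E]

theorem exists_eq_on_lt_of_notMem_affineSpan {T : Set E} {a x : E} (ha : a ∈ T)
    (hx : x ∉ affineSpan ℝ T) :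
    ∃ (g : E →ₗ[ℝ] ℝ) (γ : ℝ), (∀ s ∈ T, g s = γ) ∧ γ < g x := by
  have haT := subset_affineSpan ℝ T ha
  rw [← AffineSubspace.vsub_right_mem_direction_iff_mem haT, direction_affineSpan] at hx
  obtain ⟨f, hfx, hker⟩ := Submodule.exists_le_ker_of_notMem hx
  refine ⟨(f (x - a))⁻¹ • f, (f (x - a))⁻¹ * f a, fun s hs => ?_, ?_⟩
  · have := hker (vsub_mem_vectorSpan ℝ hs ha)
    simp_all [sub_eq_zero]
  · have : (f (x - a))⁻¹ * f (x - a) = 1 := inv_mul_cancel₀ hfx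
    simp only [LinearMap.smul_apply, smul_eq_mul, map_sub, mul_sub] at this ⊢
    linarith

end AffineSpan

section PolyDim

variable {ι : Type*}

theorem polyDim_convexHull (A : Set (ι → ℝ)) : polyDim (convexHull ℝ A) = polyDim A := by
  rw [polyDim, polyDim, ← direction_affineSpan, affineSpan_convexHull, direction_affineSpan]

variable [Finite ι]

theorem exists_mem_notMem_affineSpan_of_polyDim_lt {A B : Set (ι → ℝ)}
    (hAB : polyDim A < polyDim B) : ∃ b ∈ B, b ∉ affineSpan ℝ A := by
  by_contra! hB
  have := AffineSubspace.direction_le (affineSpan_le.2 hB)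
  rw [direction_affineSpan, direction_affineSpan] at this
  exact (Submodule.finrank_mono this).not_gt hAB

theorem sep_eq_self_of_polyDim_le {P : Set (ι → ℝ)} {h : (ι → ℝ) →ₗ[ℝ] ℝ} {m : ℝ}
    (hne : {x ∈ P | h x = m}.Nonempty) (hdim : polyDim P ≤ polyDim {x ∈ P | h x = m}) :
    {x ∈ P | h x = m} = P := by
  obtain ⟨a, haF⟩ := hne
  have hspan : vectorSpan ℝ {x ∈ P | h x = m} = vectorSpan ℝ P :=
    Submodule.eq_of_le_of_finrank_le (vectorSpan_mono ℝ (sep_subset _ _)) hdim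
  have hker : vectorSpan ℝ {x ∈ P | h x = m} ≤ LinearMap.ker h := by
    rw [vectorSpan_def, Submodule.span_le]
    rintro _ ⟨y, hy, z, hz, rfl⟩
    simp [hy.2, hz.2]
  refine subset_antisymm (sep_subset _ _) fun x hx => ⟨hx, ?_⟩
  have := hker (hspan ▸ vsub_mem_vectorSpan ℝ hx haF.1)
  rw [LinearMap.mem_ker, vsub_eq_sub, map_sub, sub_eq_zero] at this
  rw [this, haF.2]

theorem polyDim_sep_lt {P : Set (ι → ℝ)} {h : (ι → ℝ) →ₗ[ℝ] ℝ} {m : ℝ}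
    (hne : {x ∈ P | h x = m}.Nonempty) (hP : {x ∈ P | h x = m} ≠ P) :
    polyDim {x ∈ P | h x = m} < polyDim P :=
  lt_of_not_ge fun hle => hP (sep_eq_self_of_polyDim_le hne hle)

end PolyDim

section Faces

variable {ι : Type*}

theorem IsFace.subset {P F : Set (ι → ℝ)} (hF : IsFace P F) : F ⊆ P := by
  obtain ⟨_, _, _, rfl⟩ := hF
  exact sep_subset _ _

theorem Finset.convexHull_sep_eq_filter (S : Finset (ι → ℝ)) {h : (ι → ℝ) →ₗ[ℝ] ℝ} {m : ℝ}
    (hb : ∀ s ∈ S, h s ≤ m) :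
    {x ∈ convexHull ℝ (S : Set (ι → ℝ)) | h x = m} = convexHull ℝ ↑(S.filter (h · = m)) := by
  rw [Finset.coe_filter, convexHull_sep_eq hb]
  rfl

theorem IsFace.isPolytope {P F : Set (ι → ℝ)} (hP : IsPolytope P) (hF : IsFace P F) :
    IsPolytope F := by
  obtain ⟨S, rfl⟩ := hP
  obtain ⟨h, m, hb, rfl⟩ := hF
  exact ⟨_, S.convexHull_sep_eq_filter fun s hs => hb s (subset_convexHull ℝ _ hs)⟩

theorem finite_setOf_isFace (S : Finset (ι → ℝ)) :
    {F | IsFace (convexHull ℝ (S : Set (ι → ℝ))) F}.Finite := by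
  refine (S.powerset.finite_toSet.image fun T : Finset (ι → ℝ) =>
    convexHull ℝ (T : Set (ι → ℝ))).subset ?_
  rintro _ ⟨h, m, hb, rfl⟩
  exact ⟨_, Finset.mem_powerset.2 (Finset.filter_subset _ S),
    (S.convexHull_sep_eq_filter fun s hs => hb s (subset_convexHull ℝ _ hs)).symm⟩

theorem facetCount_empty : facetCount (∅ : Set (ι → ℝ)) = 0 := by
  have : IsEmpty {F : Set (ι → ℝ) // IsFacet ∅ F} :=
    ⟨fun F => F.2.2.1 (Set.subset_empty_iff.1 F.2.1.subset)⟩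
  exact Nat.card_of_isEmpty

/-- The exposing functional is `g + N • ℓ` for `N` large. -/
theorem exists_sep_eq_sep_sep (S : Finset (ι → ℝ)) {ℓ : (ι → ℝ) →ₗ[ℝ] ℝ} {c : ℝ}
    (hb : ∀ s ∈ S, ℓ s ≤ c) {g : (ι → ℝ) →ₗ[ℝ] ℝ} {d : ℝ}
    (hgd : ∀ x ∈ {x ∈ convexHull ℝ (S : Set (ι → ℝ)) | ℓ x = c}, g x ≤ d) :
    ∃ (h : (ι → ℝ) →ₗ[ℝ] ℝ) (m : ℝ), (∀ s ∈ S, h s ≤ m) ∧ (∀ s ∈ S, h s = m → ℓ s = c) ∧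
      {x ∈ convexHull ℝ (S : Set (ι → ℝ)) | h x = m}
        = {x ∈ {x ∈ convexHull ℝ (S : Set (ι → ℝ)) | ℓ x = c} | g x = d} := by
  obtain ⟨N, hN⟩ := (S.image fun s => (g s - d) / (c - ℓ s)).exists_le
  have happ : ∀ x, (g + (N + 1) • ℓ) x = g x + (N + 1) * ℓ x := fun x => rfl
  have hvert : ∀ s ∈ S, g s + (N + 1) * ℓ s ≤ d + (N + 1) * c ∧
      (g s + (N + 1) * ℓ s = d + (N + 1) * c → ℓ s = c ∧ g s = d) := fun s hs => by
    rcases (hb s hs).lt_or_eq with hlt | heq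
    · have := (div_le_iff₀ (sub_pos.2 hlt)).1 (hN _ (Finset.mem_image_of_mem _ hs))
      constructor <;> intros <;> nlinarith
    · have := hgd s ⟨subset_convexHull ℝ _ hs, heq⟩
      exact ⟨by rw [heq]; linarith, fun h' => ⟨heq, by rw [heq] at h'; linarith⟩⟩
  refine ⟨g + (N + 1) • ℓ, d + (N + 1) * c, fun s hs => (hvert s hs).1,
    fun s hs hsm => ((hvert s hs).2 hsm).1, subset_antisymm ?_ ?_⟩
  · rw [S.convexHull_sep_eq_filter fun s hs => (hvert s hs).1]
    intro x hx
    have hℓg : ∀ s ∈ S.filter (fun s => (g + (N + 1) • ℓ) s = d + (N + 1) * c),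
        ℓ s = c ∧ g s = d := fun s hs =>
      (hvert s (Finset.mem_filter.1 hs).1).2 (Finset.mem_filter.1 hs).2
    exact ⟨⟨convexHull_mono (Finset.coe_subset.2 (Finset.filter_subset _ S)) hx,
      eq_of_mem_convexHull_of_forall_eq (fun s hs => (hℓg s hs).1) hx⟩,
      eq_of_mem_convexHull_of_forall_eq (fun s hs => (hℓg s hs).2) hx⟩
  · rintro x ⟨⟨hxQ, hxℓ⟩, hxg⟩
    exact ⟨hxQ, by rw [happ, hxℓ, hxg]⟩

variable [Finite ι]

theorem IsFacet.eq_sep_of_subset {P G : Set (ι → ℝ)} (hG : IsFacet P G) (hGne : G.Nonempty)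
    {u : (ι → ℝ) →ₗ[ℝ] ℝ} {w : ℝ} (hGsub : G ⊆ {x ∈ P | u x = w})
    (hP : {x ∈ P | u x = w} ≠ P) : G = {x ∈ P | u x = w} := by
  obtain ⟨⟨g, d, -, rfl⟩, -, hdim⟩ := hG
  have hG : {x ∈ P | g x = d} = {x ∈ {x ∈ P | u x = w} | g x = d} :=
    subset_antisymm (fun x hx => ⟨hGsub hx, hx.2⟩) fun x hx => ⟨hx.1.1, hx.2⟩
  have hlt := polyDim_sep_lt (hGne.mono hGsub) hP
  rw [hG] at hGne hdim ⊢
  exact sep_eq_self_of_polyDim_le hGne (by omega)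

end Faces

section FacetCount

variable {ι : Type*} [Finite ι]

theorem exists_filter_ssubset_filter (S : Finset (ι → ℝ)) {h : (ι → ℝ) →ₗ[ℝ] ℝ} {m : ℝ}
    (hb : ∀ s ∈ S, h s ≤ m)
    (hdim : polyDim {x ∈ convexHull ℝ ↑S | h x = m} + 2
      ≤ polyDim (convexHull ℝ (S : Set (ι → ℝ)))) :
    ∃ (h' : (ι → ℝ) →ₗ[ℝ] ℝ) (m' : ℝ), (∀ s ∈ S, h' s ≤ m') ∧
      S.filter (h · = m) ⊂ S.filter (h' · = m') ∧ ∃ s ∈ S, h' s ≠ m' := by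
  rw [convexHull_sep_eq hb, polyDim_convexHull, polyDim_convexHull] at hdim
  set T : Set (ι → ℝ) := {s ∈ (S : Set (ι → ℝ)) | h s = m}
  obtain ⟨s', hs'S, hs'T⟩ :=
    exists_mem_notMem_affineSpan_of_polyDim_lt (A := T) (B := S) (by omega)
  have := finrank_vectorSpan_insert_le_set ℝ T s'
  obtain ⟨s₀, hs₀S, hs₀T⟩ := exists_mem_notMem_affineSpan_of_polyDim_lt (A := insert s' T)
    (B := S) (by unfold polyDim at *; omega)
  -- `s'` stays off the tilted face because `g` is constant on `insert s' T`
  obtain ⟨g, γ, hgT, hγ⟩ := exists_eq_on_lt_of_notMem_affineSpan (Set.mem_insert s' T) hs₀T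
  have hs'm : h s' < m :=
    (hb s' hs'S).lt_of_ne fun h' => hs'T (subset_affineSpan ℝ _ ⟨hs'S, h'⟩)
  obtain ⟨t, ht, hbt, s₁, hs₁S, hs₁m, hs₁t⟩ :=
    exists_pos_forall_add_mul_le hb (fun s hs hsm => hgT s (.inr ⟨hs, hsm⟩)) hs₀S hγ
  have happ : ∀ x, (h + t • g) x = h x + t * g x := fun x => rfl
  refine ⟨h + t • g, m + t * γ, fun s hs => happ s ▸ hbt s hs,
    (Finset.ssubset_iff_of_subset fun s hs => ?_).2 ⟨s₁, ?_, ?_⟩, s', hs'S, ?_⟩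
  · obtain ⟨hsS, hsm⟩ := Finset.mem_filter.1 hs
    exact Finset.mem_filter.2 ⟨hsS, by rw [happ, hsm, hgT s (.inr ⟨hsS, hsm⟩)]⟩
  · exact Finset.mem_filter.2 ⟨hs₁S, hs₁t⟩
  · exact fun hs₁ => hs₁m.ne (Finset.mem_filter.1 hs₁).2
  · rw [happ, hgT s' (Set.mem_insert s' T)]
    linarith

theorem IsFace.exists_isFacet_superset {P F : Set (ι → ℝ)} (hP : IsPolytope P)
    (hF : IsFace P F) (hne : F.Nonempty) (hFP : F ≠ P) : ∃ K, IsFacet P K ∧ F ⊆ K := by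
  obtain ⟨S, rfl⟩ := hP
  obtain ⟨h, m, hb, rfl⟩ := hF
  induction hn : S.card - (S.filter (h · = m)).card using Nat.strong_induction_on
    generalizing h m with
  | _ n ih =>
  by_cases hfacet : polyDim {x ∈ convexHull ℝ ↑S | h x = m} + 1
      = polyDim (convexHull ℝ (S : Set (ι → ℝ)))
  · exact ⟨_, ⟨⟨h, m, hb, rfl⟩, hFP, hfacet⟩, subset_rfl⟩
  have hbS : ∀ s ∈ S, h s ≤ m := fun s hs => hb s (subset_convexHull ℝ _ hs)
  have hlt := polyDim_sep_lt hne hFP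
  obtain ⟨h', m', hb', hss, s', hs'S, hs'm⟩ := exists_filter_ssubset_filter S hbS (by omega)
  have hsub : {x ∈ convexHull ℝ ↑S | h x = m} ⊆ {x ∈ convexHull ℝ ↑S | h' x = m'} := by
    rw [S.convexHull_sep_eq_filter hbS, S.convexHull_sep_eq_filter hb']
    exact convexHull_mono (Finset.coe_subset.2 hss.subset)
  have hcard := Finset.card_lt_card hss
  have hcard' := Finset.card_filter_le S (h' · = m')
  obtain ⟨K, hK, hsubK⟩ := ih _ (by omega) h' m' (fun x => le_of_mem_convexHull_of_forall_le hb')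
    (hne.mono hsub) (fun hQ => hs'm (hQ.symm ▸ subset_convexHull ℝ _ hs'S :
      s' ∈ {x ∈ convexHull ℝ ↑S | h' x = m'}).2) rfl
  exact ⟨K, hK, hsub.trans hsubK⟩

theorem IsFacet.exists_isFacet_ne_superset {P F G : Set (ι → ℝ)} (hP : IsPolytope P)
    (hF : IsFacet P F) (hG : IsFacet F G) (hGne : G.Nonempty) :
    ∃ K, IsFacet P K ∧ K ≠ F ∧ G ⊆ K := by
  obtain ⟨S, rfl⟩ := hP
  obtain ⟨⟨ℓ, c, hℓ, rfl⟩, hFP, -⟩ := hF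
  obtain ⟨⟨g, d, hgd, rfl⟩, hGF, -⟩ := hG
  have hb : ∀ s ∈ S, ℓ s ≤ c := fun s hs => hℓ s (subset_convexHull ℝ _ hs)
  obtain ⟨h, m, hbh, hhℓ, hG⟩ := exists_sep_eq_sep_sep S hb hgd
  obtain ⟨s₀, hs₀S, hs₀⟩ : ∃ s₀ ∈ S, -c < -ℓ s₀ := by
    by_contra! hall
    refine hFP (subset_antisymm (sep_subset _ _) fun x hx => ⟨hx, ?_⟩)
    exact eq_of_mem_convexHull_of_forall_eq
      (fun s hs => le_antisymm (hb s hs) (neg_le_neg_iff.1 (hall s hs))) hx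
  -- tilt the face `G` away from `F`, towards a vertex `s₁` off `F`
  obtain ⟨t, -, hbt, s₁, hs₁S, hs₁m, hs₁t⟩ := exists_pos_forall_add_mul_le (g := fun x => -ℓ x)
    hbh (fun s hs hsm => by rw [hhℓ s hs hsm]) hs₀S hs₀
  set h' := h - t • ℓ
  have happ : ∀ x, h' x = h x + t * -ℓ x := fun x => by simp [h', sub_eq_add_neg]
  have hb' : ∀ x ∈ convexHull ℝ ↑S, h' x ≤ m + t * -c :=
    fun x => le_of_mem_convexHull_of_forall_le fun s hs => happ s ▸ hbt s hs
  have hGsub : {x ∈ {x ∈ convexHull ℝ ↑S | ℓ x = c} | g x = d}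
      ⊆ {x ∈ convexHull ℝ ↑S | h' x = m + t * -c} := fun x hx => by
    have hxℓ := hx.1.2
    rw [← hG] at hx
    exact ⟨hx.1, by rw [happ, hx.2, hxℓ]⟩
  obtain ⟨x, hxF, hxG⟩ := Set.exists_of_ssubset ((sep_subset _ _).ssubset_of_ne hGF)
  have hxh : h x < m := (le_of_mem_convexHull_of_forall_le hbh hxF.1).lt_of_ne fun hxm =>
    hxG (hG ▸ ⟨hxF.1, hxm⟩)
  obtain ⟨K, hK, hsubK⟩ := IsFace.exists_isFacet_superset ⟨S, rfl⟩ ⟨h', _, hb', rfl⟩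
    (hGne.mono hGsub) fun hQ => by
      have := (hQ.symm ▸ hxF.1 : x ∈ {x ∈ convexHull ℝ ↑S | h' x = m + t * -c}).2
      rw [happ, hxF.2] at this
      linarith
  refine ⟨K, hK, fun hKF => ?_, hGsub.trans hsubK⟩
  have := (hKF ▸ hsubK ⟨subset_convexHull ℝ _ hs₁S, by rw [happ, hs₁t]⟩ :
    s₁ ∈ {x ∈ convexHull ℝ ↑S | ℓ x = c}).2
  rw [this] at hs₁t
  linarith

theorem IsFacet.eq_inter_of_subset {P F G K : Set (ι → ℝ)} (hF : IsFacet P F)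
    (hK : IsFacet P K) (hKF : K ≠ F) (hG : IsFacet F G) (hGne : G.Nonempty) (hGK : G ⊆ K) :
    G = F ∩ K := by
  obtain ⟨⟨u, w, -, rfl⟩, hKP, -⟩ := hK
  have hFK : F ∩ {x ∈ P | u x = w} = {x ∈ F | u x = w} :=
    subset_antisymm (fun x hx => ⟨hx.1, hx.2.2⟩) fun x hx => ⟨hx.1, hF.1.subset hx.1, hx.2⟩
  rw [hFK]
  refine hG.eq_sep_of_subset hGne (fun x hx => ⟨hG.1.subset hx, (hGK hx).2⟩) fun hFu => hKF ?_
  refine (hF.eq_sep_of_subset (hGne.mono hG.1.subset) (fun x hx => ?_) hKP).symm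
  exact ⟨hF.1.subset hx, (hFu.symm ▸ hx : x ∈ {x ∈ F | u x = w}).2⟩

theorem IsFacet.facetCount_le {P F : Set (ι → ℝ)} (hP : IsPolytope P) (hF : IsFacet P F) :
    facetCount F ≤ facetCount P := by
  have : Finite {K // IsFacet P K} := by
    obtain ⟨S, rfl⟩ := hP
    exact ((finite_setOf_isFace S).subset fun _ hK => hK.1).to_subtype
  -- the empty facet of `F` (present when `dim F = 1`) goes to `F` itself
  have hφ : ∀ G : {G // IsFacet F G}, ∃ K : {K // IsFacet P K},
      (G.1 = ∅ → K.1 = F) ∧ (G.1.Nonempty → K.1 ≠ F ∧ G.1 ⊆ K.1) := fun G => by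
    rcases G.1.eq_empty_or_nonempty with hG | hG
    · exact ⟨⟨F, hF⟩, fun _ => rfl, fun hne => absurd hG hne.ne_empty⟩
    · obtain ⟨K, hK, hKF, hGK⟩ := hF.exists_isFacet_ne_superset hP G.2 hG
      exact ⟨⟨K, hK⟩, fun he => absurd he hG.ne_empty, fun _ => ⟨hKF, hGK⟩⟩
  choose φ hφ using hφ
  refine Nat.card_le_card_of_injective φ fun G₁ G₂ h12 => Subtype.ext ?_
  rcases G₁.1.eq_empty_or_nonempty with h1 | h1 <;> rcases G₂.1.eq_empty_or_nonempty with h2 | h2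
  · rw [h1, h2]
  · exact absurd ((hφ G₁).1 h1) (h12 ▸ ((hφ G₂).2 h2).1)
  · exact absurd ((hφ G₂).1 h2) (h12 ▸ ((hφ G₁).2 h1).1)
  · rw [hF.eq_inter_of_subset (φ G₁).2 ((hφ G₁).2 h1).1 G₁.2 h1 ((hφ G₁).2 h1).2,
      hF.eq_inter_of_subset (φ G₂).2 ((hφ G₂).2 h2).1 G₂.2 h2 ((hφ G₂).2 h2).2, h12]

theorem IsFace.facetCount_le {P F : Set (ι → ℝ)} (hP : IsPolytope P) (hF : IsFace P F) :
    facetCount F ≤ facetCount P := by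
  induction hn : polyDim P using Nat.strong_induction_on generalizing P with
  | _ n ih =>
  rcases eq_or_ne F P with rfl | hFP
  · exact le_rfl
  rcases F.eq_empty_or_nonempty with rfl | hne
  · rw [facetCount_empty]
    exact Nat.zero_le _
  obtain ⟨K, hK, hFK⟩ := hF.exists_isFacet_superset hP hne hFP
  obtain ⟨ℓ, c, hb, rfl⟩ := hF
  calc facetCount {x ∈ P | ℓ x = c}
      ≤ facetCount K := by
        refine ih _ (by have := hK.2.2; omega) (hK.1.isPolytope hP)
          ⟨ℓ, c, fun x hx => hb x (hK.1.subset hx), ?_⟩ rfl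
        exact subset_antisymm (fun x hx => ⟨hFK hx, hx.2⟩) fun x hx => ⟨hK.1.subset hx.1, hx.2⟩
    _ ≤ facetCount P := hK.facetCount_le hP

end FacetCount

section ExtensionComplexity

variable {ι κ : Type*} {P : Set (ι → ℝ)}

theorem IsPolytope.image (hP : IsPolytope P) (π : (ι → ℝ) →ᵃ[ℝ] (κ → ℝ)) :
    IsPolytope (π '' P) := by
  classical
  obtain ⟨S, rfl⟩ := hP
  exact ⟨S.image π, by rw [Finset.coe_image, π.image_convexHull]⟩

theorem IsExtensionOf.xc_le {p : ℕ} {Q : Set (Fin p → ℝ)} (hQ : IsExtensionOf Q P) :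
    xc P ≤ facetCount Q :=
  Nat.sInf_le ⟨p, Q, hQ, rfl⟩

variable [Finite ι]

theorem IsPolytope.exists_isExtensionOf_facetCount_eq_xc (hP : IsPolytope P) :
    ∃ (p : ℕ) (Q : Set (Fin p → ℝ)), IsExtensionOf Q P ∧ facetCount Q = xc P := by
  let e := LinearEquiv.funCongrLeft ℝ ℝ (Finite.equivFin ι)
  have hext : IsExtensionOf (e.symm '' P) P :=
    ⟨hP.image e.symm.toLinearMap.toAffineMap, e.toLinearMap.toAffineMap, by simp [Set.image_image]⟩
  exact Nat.sInf_mem (s := {m | ∃ (p : ℕ) (Q : Set (Fin p → ℝ)), IsExtensionOf Q P ∧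
    facetCount Q = m}) ⟨_, _, _, hext, rfl⟩

theorem IsPolytope.xc_image_le (hP : IsPolytope P) (π : (ι → ℝ) →ᵃ[ℝ] (κ → ℝ)) :
    xc (π '' P) ≤ xc P := by
  obtain ⟨p, Q, ⟨hQ, ρ, rfl⟩, hxc⟩ := hP.exists_isExtensionOf_facetCount_eq_xc
  rw [← hxc, ← Set.image_comp]
  exact IsExtensionOf.xc_le ⟨hQ, π.comp ρ, rfl⟩

theorem IsPolytope.xc_le_of_isFace {F : Set (ι → ℝ)} (hP : IsPolytope P) (hF : IsFace P F) :
    xc F ≤ xc P := by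
  obtain ⟨p, Q, ⟨hQ, ρ, rfl⟩, hxc⟩ := hP.exists_isExtensionOf_facetCount_eq_xc
  obtain ⟨ℓ, c, hb, rfl⟩ := hF
  have hρ : ∀ x, ℓ (ρ x) = (ℓ ∘ₗ ρ.linear) x + ℓ (ρ 0) := fun x => by
    rw [ρ.decomp]
    simp
  have hface : IsFace Q {x ∈ Q | (ℓ ∘ₗ ρ.linear) x = c - ℓ (ρ 0)} :=
    ⟨_, _, fun x hx => by linarith [hb _ (Set.mem_image_of_mem ρ hx), hρ x], rfl⟩
  have himage : ρ '' {x ∈ Q | (ℓ ∘ₗ ρ.linear) x = c - ℓ (ρ 0)} = {y ∈ ρ '' Q | ℓ y = c} := by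
    change _ = ρ '' Q ∩ {y | ℓ y = c}
    rw [← Set.image_inter_preimage]
    congr 1
    ext x
    simp only [Set.mem_ofPred_eq, Set.mem_inter_iff, Set.mem_preimage, hρ x]
    constructor <;> rintro ⟨hx, h⟩ <;> exact ⟨hx, by linarith⟩
  rw [← hxc, ← himage]
  exact (IsExtensionOf.xc_le ⟨hface.isPolytope hQ, ρ, rfl⟩).trans (hface.facetCount_le hQ)

end ExtensionComplexity

section Correlation

variable {V W : Type*}

open scoped Classical in
def corVertex (G : SimpleGraph V) (X : Set V) : (V ⊕ G.edgeSet) → ℝ :=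
  Sum.elim (fun v => if v ∈ X then 1 else 0) fun e => if ∀ v ∈ (e : Sym2 V), v ∈ X then 1 else 0

theorem corPolytope_eq_convexHull_range (G : SimpleGraph V) :
    corPolytope G = convexHull ℝ (Set.range (corVertex G)) := by
  unfold corPolytope
  congr 1
  ext x
  constructor
  · rintro ⟨X, hv, he⟩
    exact ⟨X, funext fun i => i.rec (fun v => (hv v).symm) fun e => (he e).symm⟩
  · rintro ⟨X, rfl⟩
    exact ⟨X, fun _ => rfl, fun _ => rfl⟩

theorem corPolytope_isPolytope [Finite V] (G : SimpleGraph V) : IsPolytope (corPolytope G) :=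
  ⟨(Set.finite_range (corVertex G)).toFinset, by
    rw [corPolytope_eq_convexHull_range, Set.Finite.coe_toFinset]⟩

theorem corVertex_edge_sub_corVertex_fst_nonpos {G : SimpleGraph V} (X : Set V) (d : G.Dart) :
    corVertex G X (.inr ⟨d.edge, d.edge_mem⟩) - corVertex G X (.inl d.fst) ≤ 0 := by
  by_cases h₁ : d.fst ∈ X <;> by_cases h₂ : d.snd ∈ X <;>
    simp [corVertex, SimpleGraph.Dart.edge, h₁, h₂]

theorem corVertex_edge_sub_corVertex_fst_eq_zero_iff {G : SimpleGraph V} (X : Set V)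
    (d : G.Dart) :
    corVertex G X (.inr ⟨d.edge, d.edge_mem⟩) - corVertex G X (.inl d.fst) = 0 ↔
      (d.fst ∈ X → d.snd ∈ X) := by
  by_cases h₁ : d.fst ∈ X <;> by_cases h₂ : d.snd ∈ X <;>
    simp [corVertex, SimpleGraph.Dart.edge, h₁, h₂]

theorem SimpleGraph.Connected.mem_of_induce {G : SimpleGraph V} {s X : Set V}
    (hs : (G.induce s).Connected) (hX : ∀ u ∈ s, ∀ v ∈ s, G.Adj u v → u ∈ X → v ∈ X)
    {u v : V} (hu : u ∈ s) (hv : v ∈ s) (huX : u ∈ X) : v ∈ X := by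
  have key : ∀ b : s, Relation.ReflTransGen (G.induce s).Adj ⟨u, hu⟩ b → b.1 ∈ X :=
    fun b hb => by
      induction hb with
      | refl => exact huX
      | tail _ hab ih =>
        exact hX _ (Subtype.prop _) _ (Subtype.prop _) (SimpleGraph.induce_adj.1 hab) ih
  exact key ⟨v, hv⟩ ((SimpleGraph.reachable_iff_reflTransGen _ _).1 (hs.preconnected _ _))

end Correlation

section Minor

variable {V W : Type*} {G : SimpleGraph V} {H : SimpleGraph W}

open scoped Classical in
def branchDarts [Fintype V] (G : SimpleGraph V) (B : W → Set V) : Finset G.Dart :=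
  Finset.univ.filter fun d => ∃ w, d.fst ∈ B w ∧ d.snd ∈ B w

def branchDefect [Fintype V] (G : SimpleGraph V) (B : W → Set V) :
    ((V ⊕ G.edgeSet) → ℝ) →ₗ[ℝ] ℝ :=
  ∑ d ∈ branchDarts G B,
    (LinearMap.proj (.inr ⟨d.edge, d.edge_mem⟩) - LinearMap.proj (.inl d.fst))

theorem branchDefect_apply [Fintype V] (B : W → Set V) (x : (V ⊕ G.edgeSet) → ℝ) :
    branchDefect G B x =
      ∑ d ∈ branchDarts G B, (x (.inr ⟨d.edge, d.edge_mem⟩) - x (.inl d.fst)) := by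
  simp [branchDefect]

theorem branchDefect_corVertex_nonpos [Fintype V] (B : W → Set V) (X : Set V) :
    branchDefect G B (corVertex G X) ≤ 0 := by
  rw [branchDefect_apply]
  exact Finset.sum_nonpos fun d _ => corVertex_edge_sub_corVertex_fst_nonpos X d

theorem branchDefect_corVertex_eq_zero_iff [Fintype V] {B : W → Set V}
    (hB : ∀ w, (G.induce (B w)).Connected) (X : Set V) :
    branchDefect G B (corVertex G X) = 0 ↔ ∀ w, ∀ u ∈ B w, ∀ v ∈ B w, u ∈ X → v ∈ X := by
  rw [branchDefect_apply, Finset.sum_eq_zero_iff_of_nonpos fun d _ =>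
    corVertex_edge_sub_corVertex_fst_nonpos X d]
  simp only [branchDarts, Finset.mem_filter, Finset.mem_univ, true_and,
    corVertex_edge_sub_corVertex_fst_eq_zero_iff]
  refine ⟨fun h w u hu v hv => (hB w).mem_of_induce ?_ hu hv, fun h d ⟨w, hu, hv⟩ => h w _ hu _ hv⟩
  exact fun a ha b hb hab => h ⟨(a, b), hab⟩ ⟨w, ha, hb⟩

def branchProj (r : W → V) (σ : H.edgeSet → G.edgeSet) :
    ((V ⊕ G.edgeSet) → ℝ) →ₗ[ℝ] ((W ⊕ H.edgeSet) → ℝ) :=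
  LinearMap.funLeft ℝ ℝ (Sum.map r σ)

theorem exists_edge_between_branchSets {B : W → Set V}
    (hadj : ∀ ⦃w w'⦄, H.Adj w w' → ∃ u ∈ B w, ∃ v ∈ B w', G.Adj u v) (e : H.edgeSet) :
    ∃ e' : G.edgeSet, (∀ v ∈ (e' : Sym2 V), ∃ w ∈ (e : Sym2 W), v ∈ B w) ∧
      ∀ w ∈ (e : Sym2 W), ∃ v ∈ (e' : Sym2 V), v ∈ B w := by
  obtain ⟨e, he⟩ := e
  induction e using Sym2.ind with
  | _ a b =>
  obtain ⟨u, hu, v, hv, huv⟩ := hadj he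
  refine ⟨⟨s(u, v), huv⟩, ?_, ?_⟩ <;> simp only [Sym2.mem_iff] <;> rintro _ (rfl | rfl)
  exacts [⟨a, .inl rfl, hu⟩, ⟨b, .inr rfl, hv⟩, ⟨u, .inl rfl, hu⟩, ⟨v, .inr rfl, hv⟩]

open scoped Classical in
theorem branchProj_corVertex {B : W → Set V} {r : W → V} (hr : ∀ w, r w ∈ B w)
    {σ : H.edgeSet → G.edgeSet}
    (hσ : ∀ e, (∀ v ∈ (σ e : Sym2 V), ∃ w ∈ (e : Sym2 W), v ∈ B w) ∧
      ∀ w ∈ (e : Sym2 W), ∃ v ∈ (σ e : Sym2 V), v ∈ B w)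
    {X : Set V} (hX : ∀ w, ∀ u ∈ B w, ∀ v ∈ B w, u ∈ X → v ∈ X) :
    branchProj r σ (corVertex G X) = corVertex H (r ⁻¹' X) := by
  have hiff : ∀ w, ∀ v ∈ B w, v ∈ X ↔ r w ∈ X := fun w v hv =>
    ⟨hX w v hv _ (hr w), hX w _ (hr w) v hv⟩
  funext i
  rcases i with w | e
  · rfl
  · refine if_congr ⟨fun h w hw => ?_, fun h v hv => ?_⟩ rfl rfl
    · obtain ⟨v, hv, hvB⟩ := (hσ e).2 w hw
      exact (hiff w v hvB).1 (h v hv)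
    · obtain ⟨w, hw, hvB⟩ := (hσ e).1 v hv
      exact (hiff w v hvB).2 (h w hw)

theorem branchProj_image_sep_range_corVertex [Fintype V] {B : W → Set V}
    (hconn : ∀ w, (G.induce (B w)).Connected) (hdisj : Pairwise fun w w' => Disjoint (B w) (B w'))
    {r : W → V} (hr : ∀ w, r w ∈ B w) {σ : H.edgeSet → G.edgeSet}
    (hσ : ∀ e, (∀ v ∈ (σ e : Sym2 V), ∃ w ∈ (e : Sym2 W), v ∈ B w) ∧
      ∀ w ∈ (e : Sym2 W), ∃ v ∈ (σ e : Sym2 V), v ∈ B w) :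
    branchProj r σ '' {x ∈ Set.range (corVertex G) | branchDefect G B x = 0}
      = Set.range (corVertex H) := by
  have hbranch : ∀ {w w' v}, v ∈ B w → v ∈ B w' → w = w' := fun hv hv' =>
    by_contra fun hne => Set.disjoint_left.1 (hdisj hne) hv hv'
  have hunion : ∀ (Y : Set W) w, ∀ u ∈ B w, ∀ v ∈ B w,
      u ∈ ⋃ w' ∈ Y, B w' → v ∈ ⋃ w' ∈ Y, B w' := fun Y w u hu v hv huY => by
    obtain ⟨w', hw', hu'⟩ := Set.mem_iUnion₂.1 huY
    exact Set.mem_iUnion₂.2 ⟨w, hbranch hu' hu ▸ hw', hv⟩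
  ext y
  constructor
  · rintro ⟨_, ⟨⟨X, rfl⟩, hX⟩, rfl⟩
    exact ⟨r ⁻¹' X,
      (branchProj_corVertex hr hσ ((branchDefect_corVertex_eq_zero_iff hconn X).1 hX)).symm⟩
  · rintro ⟨Y, rfl⟩
    refine ⟨_, ⟨⟨⋃ w ∈ Y, B w, rfl⟩, (branchDefect_corVertex_eq_zero_iff hconn _).2 (hunion Y)⟩,
      ?_⟩
    rw [branchProj_corVertex hr hσ (hunion Y)]
    congr
    ext w
    simp only [Set.mem_preimage, Set.mem_iUnion₂]
    exact ⟨fun ⟨w', hw', hrw⟩ => hbranch (hr w) hrw ▸ hw', fun hw => ⟨w, hw, hr w⟩⟩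

theorem SimpleGraph.IsMinorOf.exists_isFace_image_eq [Fintype V] (hm : H.IsMinorOf G) :
    ∃ (F : Set ((V ⊕ G.edgeSet) → ℝ)) (π : ((V ⊕ G.edgeSet) → ℝ) →ᵃ[ℝ] ((W ⊕ H.edgeSet) → ℝ)),
      IsFace (corPolytope G) F ∧ π '' F = corPolytope H := by
  obtain ⟨B, hconn, hdisj, hadj⟩ := hm
  choose r hr using fun w => Set.nonempty_coe_sort.1 (hconn w).nonempty
  choose σ hσ using exists_edge_between_branchSets hadj
  have hvert : ∀ x ∈ Set.range (corVertex G), branchDefect G B x ≤ 0 :=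
    Set.forall_mem_range.2 (branchDefect_corVertex_nonpos B)
  refine ⟨{x ∈ corPolytope G | branchDefect G B x = 0}, (branchProj r σ).toAffineMap,
    ⟨_, 0, fun x hx => ?_, rfl⟩, ?_⟩
  · rw [corPolytope_eq_convexHull_range] at hx
    exact le_of_mem_convexHull_of_forall_le hvert hx
  rw [corPolytope_eq_convexHull_range, convexHull_sep_eq hvert, LinearMap.coe_toAffineMap,
    LinearMap.image_convexHull, branchProj_image_sep_range_corVertex hconn hdisj hr hσ,
    corPolytope_eq_convexHull_range]

end Minor

theorem xc_corPolytope_minor_monotone_general {W V : Type} [Fintype V]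
    (H : SimpleGraph W) (G : SimpleGraph V) (h : H.IsMinorOf G) :
    xc (corPolytope H) ≤ xc (corPolytope G) := by
  obtain ⟨F, π, hF, hπF⟩ := h.exists_isFace_image_eq
  have hP := corPolytope_isPolytope G
  rw [← hπF]
  exact ((hF.isPolytope hP).xc_image_le π).trans (hP.xc_le_of_isFace hF)

/-- **Observation (minor monotonicity).** If `H` is a minor of `G`, then
`xc(COR(H)) ≤ xc(COR(G))`. -/
theorem xc_corPolytope_minor_monotone {W V : Type} [Fintype W] [Fintype V]
    (H : SimpleGraph W) (G : SimpleGraph V) (h : H.IsMinorOf G) :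
    xc (corPolytope H) ≤ xc (corPolytope G) :=
  xc_corPolytope_minor_monotone_general H G h

end
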